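/- Gautschi's inequality: for every real x > 0 and every y ∈ (0,1), x^{1−y} < Γ(x+1)/Γ(x+y) < (x+1)^{1−y}. -/

import Mathlib

/-!
Both bounds come from log-convexity of `Γ` in the form `Γ(s + a) ≤ s ^ a Γ(s)` for `a ∈ (0, 1)`,
obtained by interpolating between `s` and `s + 1` and using `Γ(s + 1) = s Γ(s)`.
With `s = x + y`, `a = 1 - y` it gives the upper bound; with `s = x + 1`, `a = y` it gives
`Γ(x + 1) / Γ(x + y) ≥ (x + y) / (x + 1) ^ y`, and the weighted AM-GM inequality
`x ^ (1 - y) (x + 1) ^ y < x + y` turns this into the lower bound.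
-/

open Real

namespace Real

theorem Gamma_add_le_rpow_mul_Gamma {s a : ℝ} (hs : 0 < s) (ha₀ : 0 < a) (ha₁ : a < 1) :
    Gamma (s + a) ≤ s ^ a * Gamma s := by
  have hΓ : 0 ≤ Gamma s := (Gamma_pos_of_pos hs).le
  calc Gamma (s + a) = Gamma ((1 - a) * s + a * (s + 1)) := by ring_nf
    _ ≤ Gamma s ^ (1 - a) * Gamma (s + 1) ^ a :=
      Gamma_mul_add_mul_le_rpow_Gamma_mul_rpow_Gamma hs (by linarith) (by linarith) ha₀ (by ring)
    _ = s ^ a * Gamma s := by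
      rw [Gamma_add_one hs.ne', mul_rpow hs.le hΓ, ← mul_assoc, mul_comm (Gamma s ^ (1 - a)),
        mul_assoc, ← rpow_add' hΓ (by norm_num), sub_add_cancel, rpow_one]

theorem rpow_one_sub_lt_Gamma_add_one_div_Gamma_add {x y : ℝ} (hx : 0 < x) (hy₀ : 0 < y)
    (hy₁ : y < 1) : x ^ (1 - y) < Gamma (x + 1) / Gamma (x + y) := by
  have hxy : 0 < x + y := by linarith
  have hx₁ : 0 < x + 1 := by linarith
  have amgm : x ^ (1 - y) * (x + 1) ^ y < x + y := by
    have := (geom_mean_lt_arith_mean2_weighted_iff_of_pos (by linarith) hy₀ hx.le hx₁.le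
      (sub_add_cancel 1 y)).2 (by linarith)
    linarith
  have hconv : (x + y) * Gamma (x + y) ≤ (x + 1) ^ y * Gamma (x + 1) := by
    rw [← Gamma_add_one hxy.ne', add_right_comm]
    exact Gamma_add_le_rpow_mul_Gamma hx₁ hy₀ hy₁
  rw [lt_div_iff₀ (Gamma_pos_of_pos hxy)]
  refine lt_of_mul_lt_mul_left ?_ (rpow_pos_of_pos hx₁ y).le
  calc (x + 1) ^ y * (x ^ (1 - y) * Gamma (x + y))
      = x ^ (1 - y) * (x + 1) ^ y * Gamma (x + y) := by ring
    _ < (x + y) * Gamma (x + y) := mul_lt_mul_of_pos_right amgm (Gamma_pos_of_pos hxy)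
    _ ≤ (x + 1) ^ y * Gamma (x + 1) := hconv

theorem Gamma_add_one_div_Gamma_add_lt_rpow_one_sub {x y : ℝ} (hx : 0 < x) (hy₀ : 0 < y)
    (hy₁ : y < 1) : Gamma (x + 1) / Gamma (x + y) < (x + 1) ^ (1 - y) := by
  have hxy : 0 < x + y := by linarith
  rw [div_lt_iff₀ (Gamma_pos_of_pos hxy)]
  calc Gamma (x + 1) = Gamma (x + y + (1 - y)) := by ring_nf
    _ ≤ (x + y) ^ (1 - y) * Gamma (x + y) :=
      Gamma_add_le_rpow_mul_Gamma hxy (by linarith) (by linarith)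
    _ < (x + 1) ^ (1 - y) * Gamma (x + y) := by gcongr

end Real

/-- Gautschi's inequality: for `x > 0` and `y ∈ (0,1)`,
`x^{1-y} < Γ(x+1)/Γ(x+y) < (x+1)^{1-y}`. -/
theorem gautschi_inequality (x y : ℝ) (hx : 0 < x) (hy : y ∈ Set.Ioo (0 : ℝ) 1) :
    x ^ (1 - y) < Gamma (x + 1) / Gamma (x + y) ∧
      Gamma (x + 1) / Gamma (x + y) < (x + 1) ^ (1 - y) :=
  ⟨rpow_one_sub_lt_Gamma_add_one_div_Gamma_add hx hy.1 hy.2,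
    Gamma_add_one_div_Gamma_add_lt_rpow_one_sub hx hy.1 hy.2⟩
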